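/- arXiv:2003.06154 — 2 statements merged into one kernel-verified Lean document; each statement's English description precedes it below -/
import Mathlib

section
/- For a finite deterministic Markov decision process there exists a uniformly optimal stationary policy: there is a policy π_* : S → A such that for every policy π : S → A and every state x ∈ S, v_{π_*}(x) ≤ v_π(x). -/
/-!
The Bellman operator `v ↦ (x ↦ min_a g x a + λ v (f x a))` is a `λ`-contraction of the sup-norm
space `S → ℝ`; let `V` be its fixed point and `π_*` a policy that picks a minimizing action
against `V`. Then `V` is also the fixed point of the policy operator of `π_*`, that is `V = v_{π_*}`.
For any other policy `π` we have `V ≤ T_π V`, and since `T_π` is a monotone contraction whose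
iterates converge to `v_π`, this gives `V ≤ v_π`.
-/

/-- Closed-loop trajectory under a stationary policy. -/
def ctraj {S A : Type*} (f : S → A → S) (pol : S → A) (x : S) : ℕ → S
  | 0 => x
  | t + 1 => f (ctraj f pol x t) (pol (ctraj f pol x t))

/-- Value function of a stationary policy. -/
noncomputable def vpi {S A : Type*} (f : S → A → S) (g : S → A → ℝ) (lam : ℝ)
    (pol : S → A) (x : S) : ℝ :=
  ∑' t : ℕ, lam ^ t * g (ctraj f pol x t) (pol (ctraj f pol x t))

open Filter Function

theorem LipschitzWith.pi {α ι : Type*} {β : ι → Type*} [PseudoEMetricSpace α]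
    [∀ i, PseudoEMetricSpace (β i)] [Fintype ι] {K : NNReal} {F : α → ∀ i, β i} (hF : ∀ i, LipschitzWith K fun x => F x i) : LipschitzWith K F :=
  fun x y => edist_pi_le_iff.2 fun i => hF i x y

theorem LipschitzWith.finset_inf'_apply {α ι : Type*} [PseudoEMetricSpace α] {K : NNReal}
    {s : Finset ι} (hs : s.Nonempty) {F : ι → α → ℝ} (hF : ∀ i ∈ s, LipschitzWith K (F i)) :
    LipschitzWith K fun x => s.inf' hs (F · x) := by
  simp only [← Finset.inf'_apply]
  exact Finset.inf'_induction hs F (fun _ h₁ _ h₂ => by simpa only [max_self] using! h₁.min h₂) hF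

theorem ContractingWith.le_of_le_map_of_isFixedPt {α : Type*} [MetricSpace α] [CompleteSpace α]
    [Preorder α] [ClosedIciTopology α] {K : NNReal} {T : α → α} (hT : ContractingWith K T)
    (hmono : Monotone T) {x y : α} (hx : x ≤ T x) (hy : IsFixedPt T y) : x ≤ y := by
  have : Nonempty α := ⟨x⟩
  rw [hT.fixedPoint_unique hy]
  exact ge_of_tendsto (hT.tendsto_iterate_fixedPoint x)
    (Eventually.of_forall fun n => hmono.monotone_iterate_of_le_map hx (Nat.zero_le n))

section DMDP

variable {S A : Type*} (f : S → A → S) (g : S → A → ℝ) (lam : ℝ)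

lemma ctraj_succ' (pol : S → A) (x : S) (t : ℕ) :
    ctraj f pol x (t + 1) = ctraj f pol (f x (pol x)) t := by
  induction t with
  | zero => rfl
  | succ t ih => rw [ctraj.eq_2, ih]; rfl

lemma summable_discounted_cost [Finite S] [Finite A] (pol : S → A) (x : S) (hlam0 : 0 ≤ lam)
    (hlam1 : lam < 1) :
    Summable fun t : ℕ => lam ^ t * g (ctraj f pol x t) (pol (ctraj f pol x t)) := by
  obtain ⟨C, hC⟩ := (Set.finite_range fun p : S × A => |g p.1 p.2|).bddAbove
  refine Summable.of_norm_bounded ((summable_geometric_of_lt_one hlam0 hlam1).mul_right C)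
    fun t => ?_
  rw [Real.norm_eq_abs, abs_mul, abs_pow, abs_of_nonneg hlam0]
  exact mul_le_mul_of_nonneg_left (hC ⟨(_, _), rfl⟩) (pow_nonneg hlam0 t)

def qValue (v : S → ℝ) (x : S) (a : A) : ℝ :=
  g x a + lam * v (f x a)

def policyOp (pol : S → A) (v : S → ℝ) : S → ℝ :=
  fun x => qValue f g lam v x (pol x)

noncomputable def bellmanOp [Fintype A] [Nonempty A] (v : S → ℝ) : S → ℝ :=
  fun x => Finset.univ.inf' Finset.univ_nonempty (qValue f g lam v x)

lemma vpi_eq_qValue [Finite S] [Finite A] (pol : S → A) (x : S) (hlam0 : 0 ≤ lam)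
    (hlam1 : lam < 1) :
    vpi f g lam pol x = qValue f g lam (vpi f g lam pol) x (pol x) := by
  rw [vpi, (summable_discounted_cost f g lam pol x hlam0 hlam1).tsum_eq_zero_add, qValue, vpi,
    ← tsum_mul_left]
  simp only [pow_zero, one_mul, pow_succ, ctraj_succ', mul_assoc, mul_comm _ lam]
  rfl

lemma isFixedPt_policyOp_vpi [Finite S] [Finite A] (pol : S → A) (hlam0 : 0 ≤ lam)
    (hlam1 : lam < 1) : IsFixedPt (policyOp f g lam pol) (vpi f g lam pol) :=
  funext fun x => (vpi_eq_qValue f g lam pol x hlam0 hlam1).symm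

lemma policyOp_monotone (pol : S → A) (hlam0 : 0 ≤ lam) : Monotone (policyOp f g lam pol) :=
  fun _ _ hvw x => by simp only [policyOp, qValue]; gcongr; exact hvw _

lemma bellmanOp_le_policyOp [Fintype A] [Nonempty A] (pol : S → A) (v : S → ℝ) :
    bellmanOp f g lam v ≤ policyOp f g lam pol v :=
  fun x => Finset.inf'_le _ (Finset.mem_univ (pol x))

lemma exists_policyOp_eq_bellmanOp [Fintype A] [Nonempty A] (v : S → ℝ) :
    ∃ pol : S → A, policyOp f g lam pol v = bellmanOp f g lam v := by
  choose pol hpol using fun x =>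
    Finset.exists_mem_eq_inf' Finset.univ_nonempty (qValue f g lam v x)
  exact ⟨pol, funext fun x => ((hpol x).2).symm⟩

variable [Fintype S]

lemma lipschitzWith_qValue (hlam0 : 0 ≤ lam) (x : S) (a : A) :
    LipschitzWith ⟨lam, hlam0⟩ fun v : S → ℝ => qValue f g lam v x a := by
  refine LipschitzWith.of_dist_le_mul fun v w => ?_
  simp only [qValue, Real.dist_eq, add_sub_add_left_eq_sub, ← mul_sub, abs_mul,
    abs_of_nonneg hlam0]
  exact mul_le_mul_of_nonneg_left (dist_le_pi_dist v w (f x a)) hlam0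

lemma policyOp_contracting (pol : S → A) (hlam0 : 0 ≤ lam) (hlam1 : lam < 1) :
    ContractingWith ⟨lam, hlam0⟩ (policyOp f g lam pol) :=
  ⟨by exact_mod_cast hlam1, LipschitzWith.pi fun x => lipschitzWith_qValue f g lam hlam0 x (pol x)⟩

lemma bellmanOp_contracting [Fintype A] [Nonempty A] (hlam0 : 0 ≤ lam) (hlam1 : lam < 1) :
    ContractingWith ⟨lam, hlam0⟩ (bellmanOp (A := A) f g lam) :=
  ⟨by exact_mod_cast hlam1, LipschitzWith.pi fun x => LipschitzWith.finset_inf'_apply _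
    fun a _ => lipschitzWith_qValue f g lam hlam0 x a⟩

lemma vpi_eq_of_isFixedPt [Finite A] {pol : S → A} {v : S → ℝ} (hlam0 : 0 ≤ lam)
    (hlam1 : lam < 1) (hv : IsFixedPt (policyOp f g lam pol) v) : vpi f g lam pol = v :=
  (policyOp_contracting f g lam pol hlam0 hlam1).fixedPoint_unique'
    (isFixedPt_policyOp_vpi f g lam pol hlam0 hlam1) hv

lemma le_vpi_of_le_policyOp [Finite A] {pol : S → A} {v : S → ℝ} (hlam0 : 0 ≤ lam)
    (hlam1 : lam < 1) (hv : v ≤ policyOp f g lam pol v) : v ≤ vpi f g lam pol :=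
  (policyOp_contracting f g lam pol hlam0 hlam1).le_of_le_map_of_isFixedPt
    (policyOp_monotone f g lam pol hlam0) hv (isFixedPt_policyOp_vpi f g lam pol hlam0 hlam1)

end DMDP

theorem exists_uniformly_optimal_policy_general
    {S A : Type*} [Fintype S] [Fintype A] [Nonempty A]
    (f : S → A → S) (g : S → A → ℝ) (lam : ℝ) (hlam0 : 0 < lam) (hlam1 : lam < 1) :
    ∃ polStar : S → A, ∀ (pol : S → A) (x : S),
      vpi f g lam polStar x ≤ vpi f g lam pol x := by
  obtain ⟨V, hV⟩ : ∃ V, IsFixedPt (bellmanOp f g lam) V :=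
    ⟨_, (bellmanOp_contracting f g lam hlam0.le hlam1).fixedPoint_isFixedPt⟩
  obtain ⟨polStar, hpolStar⟩ := exists_policyOp_eq_bellmanOp f g lam V
  refine ⟨polStar, fun pol => ?_⟩
  rw [vpi_eq_of_isFixedPt f g lam hlam0.le hlam1 (hpolStar.trans hV)]
  exact le_vpi_of_le_policyOp f g lam hlam0.le hlam1
    (hV.symm.le.trans (bellmanOp_le_policyOp f g lam pol V))

theorem exists_uniformly_optimal_policy
    {S A : Type*} [Fintype S] [Nonempty S] [Fintype A] [Nonempty A]
    (f : S → A → S) (g : S → A → ℝ) (lam : ℝ) (hlam0 : 0 < lam) (hlam1 : lam < 1) :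
    ∃ polStar : S → A, ∀ (pol : S → A) (x : S),
      vpi f g lam polStar x ≤ vpi f g lam pol x :=
  exists_uniformly_optimal_policy_general f g lam hlam0 hlam1
end

section
/- For a finite deterministic Markov decision process, greedy policy extraction from the optimal value function is optimal: if a policy π : S → A satisfies g(x, π(x)) + λ · v_*(f(x, π(x))) = min_{u ∈ A} [ g(x, u) + λ · v_*(f(x, u)) ] for every x ∈ S, then v_π(x) = v_*(x) for every x ∈ S. -/
/-- Optimal value function: minimum over stationary policies. -/
noncomputable def vstar {S A : Type*} (f : S → A → S) (g : S → A → ℝ) (lam : ℝ)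
    (x : S) : ℝ :=
  ⨅ pol : S → A, vpi f g lam pol x

lemma abs_ciInf_sub_ciInf_le {ι : Type*} [Finite ι] [Nonempty ι] {φ ψ : ι → ℝ} {c : ℝ}
    (h : ∀ i, |φ i - ψ i| ≤ c) : |(⨅ i, φ i) - ⨅ i, ψ i| ≤ c := by
  have one_side : ∀ φ ψ : ι → ℝ, (∀ i, |φ i - ψ i| ≤ c) → (⨅ i, φ i) - ⨅ i, ψ i ≤ c := by
    intro φ ψ h
    suffices (⨅ i, φ i) - c ≤ ⨅ i, ψ i by linarith
    refine le_ciInf fun i => ?_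
    have := ciInf_le (Set.finite_range φ).bddBelow i
    linarith [(abs_le.mp (h i)).2]
  exact abs_sub_le_iff.mpr
    ⟨one_side φ ψ h, one_side ψ φ fun i => by rw [abs_sub_comm]; exact h i⟩

namespace DMDP

variable {S A : Type*} (f : S → A → S) (g : S → A → ℝ) (lam : ℝ)

def policyStep (π : S → A) (v : S → ℝ) (x : S) : ℝ :=
  g x (π x) + lam * v (f x (π x))

noncomputable def bellman (v : S → ℝ) (x : S) : ℝ :=
  ⨅ u : A, (g x u + lam * v (f x u))

lemma ctraj_succ_eq (π : S → A) (x : S) (t : ℕ) :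
    ctraj f π x (t + 1) = ctraj f π (f x (π x)) t := by
  induction t with
  | zero => rfl
  | succ t ih => rw [ctraj, ih]; rfl

lemma summable_vpi (hlam0 : 0 ≤ lam) (hlam1 : lam < 1) {M : ℝ} (hM : ∀ x a, |g x a| ≤ M)
    (π : S → A) (x : S) :
    Summable fun t : ℕ => lam ^ t * g (ctraj f π x t) (π (ctraj f π x t)) := by
  refine Summable.of_norm_bounded ((summable_geometric_of_lt_one hlam0 hlam1).mul_right M)
    fun t => ?_
  rw [Real.norm_eq_abs, abs_mul, abs_pow, abs_of_nonneg hlam0]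
  exact mul_le_mul_of_nonneg_left (hM _ _) (pow_nonneg hlam0 t)

lemma policyStep_vpi [Finite S] [Finite A] (hlam0 : 0 ≤ lam) (hlam1 : lam < 1) (π : S → A) :
    policyStep f g lam π (vpi f g lam π) = vpi f g lam π := by
  obtain ⟨M, hM⟩ := (Set.finite_range fun p : S × A => |g p.1 p.2|).bddAbove
  funext x
  rw [vpi, (summable_vpi f g lam hlam0 hlam1 (fun x a => hM ⟨(x, a), rfl⟩) π x).tsum_eq_zero_add,
    policyStep, vpi, ← tsum_mul_left, pow_zero, one_mul]
  congr 1
  exact tsum_congr fun t => by rw [ctraj_succ_eq, pow_succ]; ring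

lemma bellman_le_policyStep [Finite A] (π : S → A) (v : S → ℝ) :
    bellman f g lam v ≤ policyStep f g lam π v := fun x =>
  ciInf_le (Set.finite_range _).bddBelow (π x)

lemma exists_policyStep_eq_bellman [Finite A] [Nonempty A] (v : S → ℝ) :
    ∃ π : S → A, policyStep f g lam π v = bellman f g lam v := by
  choose π hπ using fun x : S =>
    exists_eq_ciInf_of_finite (f := fun u : A => g x u + lam * v (f x u))
  exact ⟨π, funext hπ⟩

lemma contractingWith_bellman [Fintype S] [Finite A] [Nonempty A] (hlam0 : 0 ≤ lam)
    (hlam1 : lam < 1) : ContractingWith ⟨lam, hlam0⟩ (bellman f g lam) := by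
  refine ⟨hlam1, LipschitzWith.of_dist_le_mul fun v w => ?_⟩
  refine (dist_pi_le_iff (mul_nonneg hlam0 dist_nonneg)).mpr fun x => ?_
  refine abs_ciInf_sub_ciInf_le fun u => ?_
  calc |g x u + lam * v (f x u) - (g x u + lam * w (f x u))|
      = |lam * (v (f x u) - w (f x u))| := by ring_nf
    _ = lam * |v (f x u) - w (f x u)| := by rw [abs_mul, abs_of_nonneg hlam0]
    _ ≤ lam * dist v w := mul_le_mul_of_nonneg_left (dist_le_pi_dist v w (f x u)) hlam0

variable {f g lam}

/-- At a maximiser of `v - w` the gap is at most `λ` times itself. -/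
lemma le_of_le_policyStep_of_policyStep_le [Finite S] (hlam0 : 0 ≤ lam) (hlam1 : lam < 1)
    {π : S → A} {v w : S → ℝ} (hv : v ≤ policyStep f g lam π v)
    (hw : policyStep f g lam π w ≤ w) : v ≤ w := by
  intro x
  have : Nonempty S := ⟨x⟩
  obtain ⟨x₀, hx₀⟩ := Finite.exists_max fun y => v y - w y
  set y := f x₀ (π x₀)
  have hv₀ : v x₀ ≤ g x₀ (π x₀) + lam * v y := hv x₀
  have hw₀ : g x₀ (π x₀) + lam * w y ≤ w x₀ := hw x₀
  have hgap : v x₀ - w x₀ ≤ lam * (v y - w y) := by linarith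
  have hmax_nonpos : v x₀ - w x₀ ≤ 0 := by
    nlinarith [mul_le_mul_of_nonneg_left (hx₀ y) hlam0]
  linarith [hx₀ x]

lemma vpi_eq_of_policyStep_eq [Finite S] [Finite A] (hlam0 : 0 ≤ lam) (hlam1 : lam < 1)
    {π : S → A} {v : S → ℝ} (hv : policyStep f g lam π v = v) : vpi f g lam π = v := by
  have hvpi := policyStep_vpi f g lam hlam0 hlam1 π
  exact le_antisymm (le_of_le_policyStep_of_policyStep_le hlam0 hlam1 hvpi.ge hv.le)
    (le_of_le_policyStep_of_policyStep_le hlam0 hlam1 hv.ge hvpi.le)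

lemma vstar_eq_of_bellman_eq [Finite S] [Finite A] [Nonempty A] (hlam0 : 0 ≤ lam)
    (hlam1 : lam < 1) {v : S → ℝ} (hv : bellman f g lam v = v) : vstar f g lam = v := by
  have le_vpi : ∀ π, v ≤ vpi f g lam π := fun π =>
    le_of_le_policyStep_of_policyStep_le hlam0 hlam1
      (hv.symm.trans_le (bellman_le_policyStep f g lam π v))
      (policyStep_vpi f g lam hlam0 hlam1 π).le
  obtain ⟨πv, hπv⟩ := exists_policyStep_eq_bellman f g lam v
  have vpi_πv : vpi f g lam πv = v := vpi_eq_of_policyStep_eq hlam0 hlam1 (hπv.trans hv)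
  funext x
  exact le_antisymm ((ciInf_le (Set.finite_range _).bddBelow πv).trans_eq (congrFun vpi_πv x))
    (le_ciInf fun π => le_vpi π x)

variable (f g lam)

lemma bellman_vstar [Fintype S] [Finite A] [Nonempty A] (hlam0 : 0 ≤ lam) (hlam1 : lam < 1) :
    bellman f g lam (vstar f g lam) = vstar f g lam := by
  have hT := contractingWith_bellman f g lam hlam0 hlam1
  rw [vstar_eq_of_bellman_eq hlam0 hlam1 hT.fixedPoint_isFixedPt]
  exact hT.fixedPoint_isFixedPt

end DMDP

theorem greedy_policy_is_optimal_general
    {S A : Type*} [Fintype S] [Fintype A] [Nonempty A]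
    (f : S → A → S) (g : S → A → ℝ) (lam : ℝ) (hlam0 : 0 < lam) (hlam1 : lam < 1)
    (pol : S → A)
    (hgreedy : ∀ x : S,
      g x (pol x) + lam * vstar f g lam (f x (pol x)) =
        ⨅ u : A, (g x u + lam * vstar f g lam (f x u))) :
    ∀ x : S, vpi f g lam pol x = vstar f g lam x := by
  have hstep : DMDP.policyStep f g lam pol (vstar f g lam) = vstar f g lam :=
    (funext hgreedy).trans (DMDP.bellman_vstar f g lam hlam0.le hlam1)
  exact congrFun (DMDP.vpi_eq_of_policyStep_eq hlam0.le hlam1 hstep)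

theorem greedy_policy_is_optimal
    {S A : Type*} [Fintype S] [Nonempty S] [Fintype A] [Nonempty A]
    (f : S → A → S) (g : S → A → ℝ) (lam : ℝ) (hlam0 : 0 < lam) (hlam1 : lam < 1)
    (pol : S → A)
    (hgreedy : ∀ x : S,
      g x (pol x) + lam * vstar f g lam (f x (pol x)) =
        ⨅ u : A, (g x u + lam * vstar f g lam (f x u))) :
    ∀ x : S, vpi f g lam pol x = vstar f g lam x :=
  greedy_policy_is_optimal_general f g lam hlam0 hlam1 pol hgreedy
end
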